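/- arXiv:2007.02805 — 6 statements merged into one kernel-verified Lean document; each statement's English description precedes it below -/
import Mathlib

section
/- Let J be the 2×2 matrix with rows (λ₁-μ-(λ₂-μ)-(τ/C)(λ₂-μ), p(λ₂-μ)) and (σ, -κμ-σ), where λ₂ > μ. If det J ≥ 0, then J has no positive real eigenvalue (i.e., its trace is negative). -/
/-! Since `J 1 1 < 0` and `J 0 1 * J 1 0 > 0`, `det J ≥ 0` gives `J 0 0 * J 1 1 > 0`, so `J 0 0 < 0`
and the trace is negative; then `x² - (tr J) x + det J > 0` for every `x > 0`. -/

namespace Matrix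

variable {R : Type*} [CommRing R] [LinearOrder R] [IsStrictOrderedRing R]

theorem trace_neg_of_det_nonneg_of_mul_pos (M : Matrix (Fin 2) (Fin 2) R) (h11 : M 1 1 < 0)
    (hoff : 0 < M 0 1 * M 1 0) (hdet : 0 ≤ M.det) : M.trace < 0 := by
  rw [det_fin_two] at hdet
  have h00 : M 0 0 < 0 := neg_of_mul_pos_left (hoff.trans_le (sub_nonneg.mp hdet)) h11.le
  rw [trace_fin_two]
  exact add_neg h00 h11

theorem not_isRoot_charpoly_of_trace_neg_of_det_nonneg (M : Matrix (Fin 2) (Fin 2) R)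
    (htr : M.trace < 0) (hdet : 0 ≤ M.det) {x : R} (hx : 0 < x) : ¬ M.charpoly.IsRoot x := by
  have hpos : 0 < x ^ 2 - M.trace * x + M.det := by
    have : 0 < -M.trace * x := mul_pos (neg_pos.mpr htr) hx
    nlinarith [sq_nonneg x]
  simpa [Polynomial.IsRoot, charpoly_fin_two] using hpos.ne'

end Matrix

theorem stmt_8_general (lam1 lam2 mu C sigma tau p kappa : ℝ)
    (hmu : 0 < mu) (hsigma : 0 < sigma)
    (hp0 : 0 < p) (hkappa : 0 ≤ kappa) (hfit2 : lam2 > mu) :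
    let J : Matrix (Fin 2) (Fin 2) ℝ :=
      !![lam1 - mu - (lam2 - mu) - tau / C * (lam2 - mu), p * (lam2 - mu);
         sigma, -(kappa * mu) - sigma]
    J.det ≥ 0 →
      (J.trace < 0 ∧ ∀ x : ℝ, 0 < x → ¬ (Matrix.charpoly J).IsRoot x) := by
  intro J hdet
  have h11 : J 1 1 < 0 := by
    change -(kappa * mu) - sigma < 0
    linarith [mul_nonneg hkappa hmu.le]
  have hoff : 0 < J 0 1 * J 1 0 := mul_pos (mul_pos hp0 (sub_pos.mpr hfit2)) hsigma
  have htr := J.trace_neg_of_det_nonneg_of_mul_pos h11 hoff hdet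
  exact ⟨htr, fun x hx => J.not_isRoot_charpoly_of_trace_neg_of_det_nonneg htr hdet hx⟩

theorem stmt_8 (lam1 lam2 mu C sigma tau p kappa : ℝ)
    (hmu : 0 < mu) (hC : 0 < C) (hsigma : 0 < sigma) (htau : 0 < tau)
    (hp0 : 0 < p) (hp1 : p < 1) (hkappa : 0 ≤ kappa) (hfit2 : lam2 > mu) :
    let J : Matrix (Fin 2) (Fin 2) ℝ :=
      !![lam1 - mu - (lam2 - mu) - tau / C * (lam2 - mu), p * (lam2 - mu);
         sigma, -(kappa * mu) - sigma]
    J.det ≥ 0 →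
      (J.trace < 0 ∧ ∀ x : ℝ, 0 < x → ¬ (Matrix.charpoly J).IsRoot x) :=
  stmt_8_general lam1 lam2 mu C sigma tau p kappa hmu hsigma hp0 hkappa hfit2
end

section
/- If either (λ₂-μ) < (Cpσ/(τ(κμ+σ)))(λ₂-μ) + (C/τ)(λ₁-λ₂) < (λ₁-μ) or (λ₂-μ) > (Cpσ/(τ(κμ+σ)))(λ₂-μ) + (C/τ)(λ₁-λ₂) > (λ₁-μ) holds, then the point (n₁ₐ, n₁d, n₂) with n₁ₐ = (C(κμ+σ)(λ₂-λ₁)+Cpσ(μ-λ₂)+(κμ+σ)τ(λ₂-μ))/(τ(Cpσ-(κμ+σ)τ)), n₁d = pC(λ₂-λ₁)·n₁ₐ/(Cpσ-(κμ+σ)τ), and n₂ = (C(κμ+σ)(λ₂-λ₁)+Cpσ(μ-λ₂)+(κμ+σ)τ(λ₁-μ))/(-τ(Cpσ-(κμ+σ)τ)) has all three coordinates strictly positive. -/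
/-!
Write `s = κμ + σ`, `D = Cpσ - sτ` and `M` for the middle term of the hypothesis. Clearing
denominators, `n₁ₐ = s (λ₂ - μ - M) / D`, `n₂ = s (M - (λ₁ - μ)) / D` and
`n₁d = pC (λ₂ - λ₁) n₁ₐ / D`, so everything hinges on the sign of `D`. The identity
`τs (λ₁ - μ - M) + D (λ₁ - μ) = -C (s - pσ) (λ₁ - λ₂)`, where `s - pσ > 0` because `p < 1`,
shows that `D` has the sign of `λ₂ - μ - M` as soon as `M` lies strictly between `λ₂ - μ`
and `λ₁ - μ`.
-/

lemma div_pos_of_strictly_between {u v M D k c : ℝ} (hk : 0 < k) (hc : 0 < c) (hv : 0 < v)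
    (hD : k * (v - M) + D * v = -(c * (v - u)))
    (hM : u < M ∧ M < v ∨ u > M ∧ M > v) :
    0 < (u - M) / D ∧ 0 < (u - v) / D ∧ 0 < (M - v) / D := by
  rcases hM with ⟨huM, hMv⟩ | ⟨huM, hMv⟩
  · have hDv : D * v < 0 := by
      nlinarith [mul_pos hk (sub_pos.2 hMv), mul_pos hc (sub_pos.2 (huM.trans hMv))]
    have hD : D < 0 := neg_of_mul_neg_left hDv hv.le
    exact ⟨div_pos_of_neg_of_neg (by linarith) hD, div_pos_of_neg_of_neg (by linarith) hD,
      div_pos_of_neg_of_neg (by linarith) hD⟩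
  · have hDv : 0 < D * v := by
      nlinarith [mul_pos hk (sub_pos.2 hMv), mul_pos hc (sub_pos.2 (hMv.trans huM))]
    have hD : 0 < D := pos_of_mul_pos_left hDv hv.le
    exact ⟨div_pos (by linarith) hD, div_pos (by linarith) hD, div_pos (by linarith) hD⟩

theorem stmt_9 (lam1 lam2 mu C sigma tau p kappa : ℝ)
    (hmu : 0 < mu) (hC : 0 < C) (hsigma : 0 < sigma) (htau : 0 < tau)
    (hp0 : 0 < p) (hp1 : p < 1) (hkappa : 0 ≤ kappa) (hfit : lam1 > mu)
    (hcond :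
      (lam2 - mu <
          C * p * sigma / (tau * (kappa * mu + sigma)) * (lam2 - mu) + C / tau * (lam1 - lam2)
        ∧ C * p * sigma / (tau * (kappa * mu + sigma)) * (lam2 - mu) + C / tau * (lam1 - lam2)
          < lam1 - mu)
      ∨
      (lam2 - mu >
          C * p * sigma / (tau * (kappa * mu + sigma)) * (lam2 - mu) + C / tau * (lam1 - lam2)
        ∧ C * p * sigma / (tau * (kappa * mu + sigma)) * (lam2 - mu) + C / tau * (lam1 - lam2)
          > lam1 - mu)) :
    let n1a : ℝ := (C * (kappa * mu + sigma) * (lam2 - lam1) + C * p * sigma * (mu - lam2)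
        + (kappa * mu + sigma) * tau * (lam2 - mu))
      / (tau * (C * p * sigma - (kappa * mu + sigma) * tau))
    let n1d : ℝ := p * C * (lam2 - lam1) * n1a / (C * p * sigma - (kappa * mu + sigma) * tau)
    let n2 : ℝ := (C * (kappa * mu + sigma) * (lam2 - lam1) + C * p * sigma * (mu - lam2)
        + (kappa * mu + sigma) * tau * (lam1 - mu))
      / (-(tau * (C * p * sigma - (kappa * mu + sigma) * tau)))
    0 < n1a ∧ 0 < n1d ∧ 0 < n2 := by
  intro n1a n1d n2
  set s := kappa * mu + sigma
  set D := C * p * sigma - s * tau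
  set M := C * p * sigma / (tau * s) * (lam2 - mu) + C / tau * (lam1 - lam2) with hM
  have hs : 0 < s := by positivity
  have hc : 0 < C * (s - p * sigma) := mul_pos hC (by nlinarith [mul_nonneg hkappa hmu.le])
  obtain ⟨h1a, h1d, h2⟩ := div_pos_of_strictly_between (D := D) (mul_pos htau hs) hc
    (sub_pos.2 hfit) (by rw [hM]; field_simp; ring) hcond
  have hD : D ≠ 0 := by rintro hD; simp [hD] at h1d
  have hn1a : n1a = s * ((lam2 - mu - M) / D) := by
    simp only [n1a, hM, D, s] at hD ⊢; field_simp; ring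
  have hn1d : n1d = p * C * n1a * ((lam2 - mu - (lam1 - mu)) / D) := by
    simp only [n1d, D, s]; ring
  have hn2 : n2 = s * ((M - (lam1 - mu)) / D) := by
    simp only [n2, hM, D, s] at hD ⊢; field_simp; ring
  have hn1a_pos : 0 < n1a := hn1a ▸ mul_pos hs h1a
  exact ⟨hn1a_pos, hn1d ▸ mul_pos (by positivity) h1d, hn2 ▸ mul_pos hs h2⟩
end

section
/- Let (n₁ₐ, n₁d, n₂) be a coordinatewise positive point satisfying: λ₁-μ-C(n₁ₐ+n₂)-τn₂+σ·n₁d/n₁ₐ = 0, pC(n₁ₐ+n₂)-(κμ+σ)·n₁d/n₁ₐ = 0, and λ₂-μ-C(n₁ₐ+n₂)+τn₁ₐ = 0. Then it is the unique such point, and its coordinates are given by the explicit formulas n₁ₐ = (C(κμ+σ)(λ₂-λ₁)+Cpσ(μ-λ₂)+(κμ+σ)τ(λ₂-μ))/(τ(Cpσ-(κμ+σ)τ)), n₁d = pC(λ₂-λ₁)·n₁ₐ/(Cpσ-(κμ+σ)τ), n₂ = (C(κμ+σ)(λ₂-λ₁)+Cpσ(μ-λ₂)+(κμ+σ)τ(λ₁-μ))/(-τ(Cpσ-(κμ+σ)τ)).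 -/
/-!
Write `k = κμ + σ`, `S = n₁ₐ + n₂` and `D = Cpσ - kτ`. Subtracting the third equation from the
first gives `λ₁ - λ₂ - τS + σ n₁d/n₁ₐ = 0`; combined with the second equation `pCS = k n₁d/n₁ₐ`
this is a linear system in `S` and `n₁d/n₁ₐ` with determinant `D`, whence `D S = k(λ₂ - λ₁)` and
`D n₁d/n₁ₐ = pC(λ₂ - λ₁)`. The third equation then determines `n₁ₐ`, and `n₂ = S - n₁ₐ`.
-/

section CoexistenceEquilibrium

variable {F : Type*} [Field F] {lam1 lam2 mu C sigma tau p k a d n2 : F}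

def IsCoexistenceEquilibrium (lam1 lam2 mu C sigma tau p k a d n2 : F) : Prop :=
  lam1 - mu - C * (a + n2) - tau * n2 + sigma * d / a = 0 ∧
    p * C * (a + n2) - k * d / a = 0 ∧
    lam2 - mu - C * (a + n2) + tau * a = 0

namespace IsCoexistenceEquilibrium

theorem total_mul_det (h : IsCoexistenceEquilibrium lam1 lam2 mu C sigma tau p k a d n2) :
    (a + n2) * (C * p * sigma - k * tau) = k * (lam2 - lam1) := by
  obtain ⟨h1, h2, h3⟩ := h
  linear_combination k * (h1 - h3) + sigma * h2

theorem dormant_mul_det (h : IsCoexistenceEquilibrium lam1 lam2 mu C sigma tau p k a d n2)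
    (ha : a ≠ 0) :
    d * (C * p * sigma - k * tau) = p * C * (lam2 - lam1) * a := by
  obtain ⟨h1, h2, h3⟩ := h
  have hratio : d / a * (C * p * sigma - k * tau) = p * C * (lam2 - lam1) := by
    linear_combination p * C * (h1 - h3) + tau * h2
  rw [div_mul_eq_mul_div, div_eq_iff ha] at hratio
  exact hratio

theorem active_mul_det (h : IsCoexistenceEquilibrium lam1 lam2 mu C sigma tau p k a d n2) :
    a * (tau * (C * p * sigma - k * tau)) =
      C * k * (lam2 - lam1) + C * p * sigma * (mu - lam2) + k * tau * (lam2 - mu) := by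
  linear_combination (C * p * sigma - k * tau) * h.2.2 + C * h.total_mul_det

theorem second_mul_det (h : IsCoexistenceEquilibrium lam1 lam2 mu C sigma tau p k a d n2) :
    n2 * -(tau * (C * p * sigma - k * tau)) =
      C * k * (lam2 - lam1) + C * p * sigma * (mu - lam2) + k * tau * (lam1 - mu) := by
  linear_combination h.active_mul_det - tau * h.total_mul_det

end IsCoexistenceEquilibrium

end CoexistenceEquilibrium

theorem stmt_10_general (lam1 lam2 mu C sigma tau p kappa : ℝ)
    (htau : 0 < tau)
    (hne : C * p * sigma ≠ (kappa * mu + sigma) * tau)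
    (n1a n1d n2 : ℝ) (hn1a : 0 < n1a)
    (heq1 : lam1 - mu - C * (n1a + n2) - tau * n2 + sigma * n1d / n1a = 0)
    (heq2 : p * C * (n1a + n2) - (kappa * mu + sigma) * n1d / n1a = 0)
    (heq3 : lam2 - mu - C * (n1a + n2) + tau * n1a = 0) :
    n1a = (C * (kappa * mu + sigma) * (lam2 - lam1) + C * p * sigma * (mu - lam2)
        + (kappa * mu + sigma) * tau * (lam2 - mu))
      / (tau * (C * p * sigma - (kappa * mu + sigma) * tau))
    ∧ n1d = p * C * (lam2 - lam1) * n1a / (C * p * sigma - (kappa * mu + sigma) * tau)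
    ∧ n2 = (C * (kappa * mu + sigma) * (lam2 - lam1) + C * p * sigma * (mu - lam2)
        + (kappa * mu + sigma) * tau * (lam1 - mu))
      / (-(tau * (C * p * sigma - (kappa * mu + sigma) * tau))) := by
  have h : IsCoexistenceEquilibrium lam1 lam2 mu C sigma tau p (kappa * mu + sigma) n1a n1d n2 :=
    ⟨heq1, heq2, heq3⟩
  have hdet : C * p * sigma - (kappa * mu + sigma) * tau ≠ 0 := sub_ne_zero.mpr hne
  have htau_det : tau * (C * p * sigma - (kappa * mu + sigma) * tau) ≠ 0 :=
    mul_ne_zero htau.ne' hdet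
  refine ⟨?_, ?_, ?_⟩
  · rw [eq_div_iff htau_det]
    exact h.active_mul_det
  · rw [eq_div_iff hdet]
    exact h.dormant_mul_det hn1a.ne'
  · rw [eq_div_iff (neg_ne_zero.mpr htau_det)]
    exact h.second_mul_det

theorem stmt_10 (lam1 lam2 mu C sigma tau p kappa : ℝ)
    (hmu : 0 < mu) (hC : 0 < C) (hsigma : 0 < sigma) (htau : 0 < tau)
    (hp0 : 0 < p) (hp1 : p < 1) (hkappa : 0 ≤ kappa)
    (hne : C * p * sigma ≠ (kappa * mu + sigma) * tau)
    (n1a n1d n2 : ℝ) (hn1a : 0 < n1a) (hn1d : 0 < n1d) (hn2 : 0 < n2)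
    (heq1 : lam1 - mu - C * (n1a + n2) - tau * n2 + sigma * n1d / n1a = 0)
    (heq2 : p * C * (n1a + n2) - (kappa * mu + sigma) * n1d / n1a = 0)
    (heq3 : lam2 - mu - C * (n1a + n2) + tau * n1a = 0) :
    n1a = (C * (kappa * mu + sigma) * (lam2 - lam1) + C * p * sigma * (mu - lam2)
        + (kappa * mu + sigma) * tau * (lam2 - mu))
      / (tau * (C * p * sigma - (kappa * mu + sigma) * tau))
    ∧ n1d = p * C * (lam2 - lam1) * n1a / (C * p * sigma - (kappa * mu + sigma) * tau)
    ∧ n2 = (C * (kappa * mu + sigma) * (lam2 - lam1) + C * p * sigma * (mu - lam2)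
        + (kappa * mu + sigma) * tau * (lam1 - mu))
      / (-(tau * (C * p * sigma - (kappa * mu + sigma) * tau))) :=
  stmt_10_general lam1 lam2 mu C sigma tau p kappa htau hne n1a n1d n2 hn1a heq1 heq2 heq3
end

section
/- Under the stable-coexistence assumption (λ₂-μ) < (Cpσ/(τ(κμ+σ)))(λ₂-μ) + (C/τ)(λ₁-λ₂) < (λ₁-μ) (with λ₁ > μ), the coexistence equilibrium satisfies n̄₁ₐ > n₁ₐ + n₂ > (λ₂-μ)/C, where n̄₁ₐ = ((λ₁-μ)/C)·((κμ+σ)/(κμ+(1-p)σ)). -/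
/-!
Write `K = κμ + σ` and `a = Cpσ`. The two equilibrium densities share the denominator
`τ(a - Kτ)`, and in their sum everything cancels except `K(λ₁ - λ₂) / (τK - a)`.
Cleared of denominators, the two stability inequalities say
`(τK - a)(λ₂ - μ) < CK(λ₁ - λ₂)` and `(λ₁ - λ₂)(CK - a) < (λ₁ - μ)(τK - a)`; the first is the
lower bound, and since `CK - a = C(κμ + (1 - p)σ) > 0` the second forces `τK > a` and is
the upper bound.
-/

section Coexistence

variable {a C K τ lam1 lam2 mu : ℝ}

theorem coexistence_total_eq (hτ : τ ≠ 0) :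
    (C * K * (lam2 - lam1) + a * (mu - lam2) + K * τ * (lam2 - mu)) / (τ * (a - K * τ))
      + (C * K * (lam2 - lam1) + a * (mu - lam2) + K * τ * (lam1 - mu)) / (-(τ * (a - K * τ)))
      = K * (lam1 - lam2) / (τ * K - a) := by
  rw [div_neg, ← sub_eq_add_neg, ← sub_div]
  by_cases hD : a - K * τ = 0
  · have hD' : τ * K - a = 0 := by linarith
    simp [hD, hD']
  · have hD' : τ * K - a ≠ 0 := fun h => hD (by linarith)
    rw [div_eq_div_iff (mul_ne_zero hτ hD) hD']
    ring

theorem stability_index_eq (hτK : 0 < τ * K) (x y : ℝ) :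
    a / (τ * K) * x + C / τ * y = (a * x + C * K * y) / (τ * K) := by
  have hτ : τ ≠ 0 := left_ne_zero_of_mul hτK.ne'
  have hK : K ≠ 0 := right_ne_zero_of_mul hτK.ne'
  field_simp

theorem stability_lower_iff (hτK : 0 < τ * K) :
    lam2 - mu < a / (τ * K) * (lam2 - mu) + C / τ * (lam1 - lam2) ↔
      (τ * K - a) * (lam2 - mu) < C * K * (lam1 - lam2) := by
  rw [stability_index_eq hτK, lt_div_iff₀ hτK]
  constructor <;> intro h <;> linarith

theorem stability_upper_iff (hτK : 0 < τ * K) :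
    a / (τ * K) * (lam2 - mu) + C / τ * (lam1 - lam2) < lam1 - mu ↔
      (lam1 - lam2) * (C * K - a) < (lam1 - mu) * (τ * K - a) := by
  rw [stability_index_eq hτK, div_lt_iff₀ hτK]
  constructor <;> intro h <;> linarith

theorem lt_coexistence_total (hC : 0 < C) (hD : 0 < τ * K - a)
    (h : (τ * K - a) * (lam2 - mu) < C * K * (lam1 - lam2)) :
    (lam2 - mu) / C < K * (lam1 - lam2) / (τ * K - a) := by
  rw [div_lt_div_iff₀ hC hD]
  linarith

theorem coexistence_total_lt {K' : ℝ} (hC : 0 < C) (hK : 0 < K) (hK' : 0 < K')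
    (hD : 0 < τ * K - a) (h : (lam1 - lam2) * (C * K') < (lam1 - mu) * (τ * K - a)) :
    K * (lam1 - lam2) / (τ * K - a) < (lam1 - mu) / C * (K / K') := by
  rw [div_mul_div_comm, div_lt_div_iff₀ hD (mul_pos hC hK')]
  have := mul_lt_mul_of_pos_left h hK
  linarith

end Coexistence

theorem stmt_16_general (lam1 lam2 mu C sigma tau p kappa : ℝ)
    (hmu : 0 < mu) (hC : 0 < C) (hsigma : 0 < sigma) (htau : 0 < tau)
    (hp1 : p < 1) (hkappa : 0 ≤ kappa) (hfit : lam1 > mu)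
    (hcond1 : lam2 - mu <
      C * p * sigma / (tau * (kappa * mu + sigma)) * (lam2 - mu) + C / tau * (lam1 - lam2))
    (hcond2 : C * p * sigma / (tau * (kappa * mu + sigma)) * (lam2 - mu) + C / tau * (lam1 - lam2)
      < lam1 - mu) :
    let n1a : ℝ := (C * (kappa * mu + sigma) * (lam2 - lam1) + C * p * sigma * (mu - lam2)
        + (kappa * mu + sigma) * tau * (lam2 - mu))
      / (tau * (C * p * sigma - (kappa * mu + sigma) * tau))
    let n2 : ℝ := (C * (kappa * mu + sigma) * (lam2 - lam1) + C * p * sigma * (mu - lam2)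
        + (kappa * mu + sigma) * tau * (lam1 - mu))
      / (-(tau * (C * p * sigma - (kappa * mu + sigma) * tau)))
    let n1abar : ℝ := ((lam1 - mu) / C) * ((kappa * mu + sigma) / (kappa * mu + (1 - p) * sigma))
    n1abar > n1a + n2 ∧ n1a + n2 > (lam2 - mu) / C := by
  intro n1a n2 n1abar
  have hK : 0 < kappa * mu + sigma := by positivity
  have hK' : 0 < kappa * mu + (1 - p) * sigma := by nlinarith
  have hτK : 0 < tau * (kappa * mu + sigma) := by positivity
  have hlower := (stability_lower_iff hτK).1 hcond1
  have hupper := (stability_upper_iff hτK).1 hcond2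
  have hCK' : C * (kappa * mu + sigma) - C * p * sigma = C * (kappa * mu + (1 - p) * sigma) := by
    ring
  rw [hCK'] at hupper
  have hD : 0 < tau * (kappa * mu + sigma) - C * p * sigma := by
    have hlam : lam2 < lam1 := by linarith
    refine pos_of_mul_pos_right ?_ (sub_pos.2 hfit).le
    exact lt_trans (mul_pos (sub_pos.2 hlam) (mul_pos hC hK')) hupper
  have hS : n1a + n2 = (kappa * mu + sigma) * (lam1 - lam2)
      / (tau * (kappa * mu + sigma) - C * p * sigma) :=
    coexistence_total_eq htau.ne'
  rw [hS]
  exact ⟨coexistence_total_lt hC hK hK' hD hupper, lt_coexistence_total hC hD hlower⟩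

theorem stmt_16 (lam1 lam2 mu C sigma tau p kappa : ℝ)
    (hmu : 0 < mu) (hC : 0 < C) (hsigma : 0 < sigma) (htau : 0 < tau)
    (hp0 : 0 < p) (hp1 : p < 1) (hkappa : 0 ≤ kappa) (hfit : lam1 > mu)
    (hcond1 : lam2 - mu <
      C * p * sigma / (tau * (kappa * mu + sigma)) * (lam2 - mu) + C / tau * (lam1 - lam2))
    (hcond2 : C * p * sigma / (tau * (kappa * mu + sigma)) * (lam2 - mu) + C / tau * (lam1 - lam2)
      < lam1 - mu) :
    let n1a : ℝ := (C * (kappa * mu + sigma) * (lam2 - lam1) + C * p * sigma * (mu - lam2)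
        + (kappa * mu + sigma) * tau * (lam2 - mu))
      / (tau * (C * p * sigma - (kappa * mu + sigma) * tau))
    let n2 : ℝ := (C * (kappa * mu + sigma) * (lam2 - lam1) + C * p * sigma * (mu - lam2)
        + (kappa * mu + sigma) * tau * (lam1 - mu))
      / (-(tau * (C * p * sigma - (kappa * mu + sigma) * tau)))
    let n1abar : ℝ := ((lam1 - mu) / C) * ((kappa * mu + sigma) / (kappa * mu + (1 - p) * sigma))
    n1abar > n1a + n2 ∧ n1a + n2 > (lam2 - mu) / C :=
  stmt_16_general lam1 lam2 mu C sigma tau p kappa hmu hC hsigma htau hp1 hkappa hfit hcond1 hcond2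
end

section
/- Let A be the 3×3 Jacobi matrix at the coexistence equilibrium, A = [[-C·n₁ₐ - σ·n₁d/n₁ₐ, σ, -(C+τ)·n₁ₐ], [2pC·n₁ₐ + pC·n₂, -κμ-σ, pC·n₁ₐ], [(-C+τ)·n₂, 0, -C·n₂]], where (n₁ₐ, n₁d, n₂) satisfies pC(n₁ₐ+n₂) = (κμ+σ)·n₁d/n₁ₐ. Then det A = τ·n₁ₐ·n₂·(Cpσ - (κμ+σ)τ). -/
theorem stmt_17_general (mu C sigma tau p kappa n1a n1d n2 : ℝ)
    (heq2 : p * C * (n1a + n2) - (kappa * mu + sigma) * n1d / n1a = 0) :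
    let A : Matrix (Fin 3) (Fin 3) ℝ :=
      !![-(C * n1a) - sigma * n1d / n1a, sigma, -(C + tau) * n1a;
         2 * p * C * n1a + p * C * n2, -(kappa * mu) - sigma, p * C * n1a;
         (-C + tau) * n2, 0, -(C * n2)]
    A.det = tau * n1a * n2 * (C * p * sigma - (kappa * mu + sigma) * tau) := by
  intro A
  rw [Matrix.det_fin_three]
  simp only [A, Matrix.of_apply, Matrix.cons_val', Matrix.cons_val_zero, Matrix.cons_val_one,
    Matrix.cons_val_two, Matrix.head_cons, Matrix.tail_cons, Matrix.head_fin_const,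
    Matrix.empty_val', Matrix.cons_val_fin_one]
  -- `n1d` occurs only in `A 0 0`, whose cofactor is `(kappa * mu + sigma) * C * n2`,
  -- so the equilibrium relation eliminates it.
  linear_combination C * n2 * sigma * heq2

theorem stmt_17 (mu C sigma tau p kappa n1a n1d n2 : ℝ)
    (hmu : 0 < mu) (hC : 0 < C) (hsigma : 0 < sigma) (htau : 0 < tau)
    (hp0 : 0 < p) (hp1 : p < 1) (hkappa : 0 ≤ kappa)
    (hn1a : 0 < n1a) (hn1d : 0 < n1d) (hn2 : 0 < n2)
    (heq2 : p * C * (n1a + n2) - (kappa * mu + sigma) * n1d / n1a = 0) :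
    let A : Matrix (Fin 3) (Fin 3) ℝ :=
      !![-(C * n1a) - sigma * n1d / n1a, sigma, -(C + tau) * n1a;
         2 * p * C * n1a + p * C * n2, -(kappa * mu) - sigma, p * C * n1a;
         (-C + tau) * n2, 0, -(C * n2)]
    A.det = tau * n1a * n2 * (C * p * sigma - (kappa * mu + sigma) * tau) :=
  stmt_17_general mu C sigma tau p kappa n1a n1d n2 heq2
end

section
/- Under the founder-control condition (λ₂-μ) > (Cpσ/(τ(κμ+σ)))(λ₂-μ) + (C/τ)(λ₁-λ₂) > (λ₁-μ) with λ₁ > μ, the Jacobi matrix A at the coexistence equilibrium (as above) has positive determinant and negative trace; consequently A has at least one eigenvalue with positive real part and at least one with negative real part, so the coexistence equilibrium is unstable. -/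
/-!
The identity `(κμ + σ) n₁d = pC n₁ₐ (n₁ₐ + n₂)` satisfied by the equilibrium collapses the
cofactor expansion of `det A` to `τ n₁ₐ n₂ (Cpσ - (κμ + σ)τ)`. The founder-control condition gives
`λ₁ < λ₂`, `Cpσ > (κμ + σ)τ` and positivity of the equilibrium, hence `det A > 0`, and the diagonal
of `A` is negative, hence `tr A < 0`. The characteristic polynomial of a `3 × 3` matrix is monic of
odd degree with value `-det A < 0` at the origin, so it has a positive real root; and the
eigenvalues sum to `tr A < 0`, so one of them has negative real part.
-/

open Polynomial

theorem Polynomial.exists_pos_isRoot_of_eval_zero_neg {P : ℝ[X]} (hdeg : 0 < P.degree)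
    (hlead : 0 ≤ P.leadingCoeff) (h0 : P.eval 0 < 0) : ∃ c : ℝ, 0 < c ∧ P.IsRoot c := by
  obtain ⟨b, hPb, hb⟩ := ((P.tendsto_atTop_of_leadingCoeff_nonneg hdeg hlead).eventually_gt_atTop 0
    |>.and (Filter.eventually_gt_atTop 0)).exists
  obtain ⟨c, hc, hPc⟩ := intermediate_value_Icc hb.le P.continuous.continuousOn ⟨h0.le, hPb.le⟩
  refine ⟨c, hc.1.lt_of_ne ?_, hPc⟩
  rintro rfl
  exact h0.ne hPc

namespace Matrix

variable {n : Type*} [Fintype n] [DecidableEq n]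

theorem exists_isRoot_charpoly_re_neg_of_trace_re_neg (A : Matrix n n ℂ) (htr : A.trace.re < 0) :
    ∃ z : ℂ, A.charpoly.IsRoot z ∧ z.re < 0 := by
  by_contra! hroots
  rw [trace_eq_sum_roots_charpoly, ← Complex.coe_reAddGroupHom, map_multiset_sum] at htr
  refine htr.not_ge (Multiset.sum_nonneg fun x hx => ?_)
  obtain ⟨z, hz, rfl⟩ := Multiset.mem_map.mp hx
  exact hroots z (isRoot_of_mem_roots hz)

theorem exists_isRoot_charpoly_re_pos_of_det_pos (A : Matrix n n ℝ) (hodd : Odd (Fintype.card n))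
    (hdet : 0 < A.det) : ∃ z : ℂ, (A.map Complex.ofReal).charpoly.IsRoot z ∧ 0 < z.re := by
  have hcoeff : A.charpoly.eval 0 = -A.det := by
    rw [← coeff_zero_eq_eval_zero, det_eq_sign_charpoly_coeff, hodd.neg_one_pow]
    ring
  have hdeg : 0 < A.charpoly.degree := by
    rw [degree_eq_natDegree A.charpoly_monic.ne_zero, charpoly_natDegree_eq_dim]
    exact_mod_cast hodd.pos
  obtain ⟨c, hc, hroot⟩ := exists_pos_isRoot_of_eval_zero_neg hdeg
    (by rw [A.charpoly_monic.leadingCoeff]; exact zero_le_one) (by linarith)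
  refine ⟨c, ?_, by simpa using hc⟩
  rw [show A.map Complex.ofReal = A.map Complex.ofRealHom from rfl, charpoly_map]
  exact hroot.map

theorem exists_isRoot_charpoly_re_neg_of_trace_neg (A : Matrix n n ℝ) (htr : A.trace < 0) :
    ∃ z : ℂ, (A.map Complex.ofReal).charpoly.IsRoot z ∧ z.re < 0 := by
  refine exists_isRoot_charpoly_re_neg_of_trace_re_neg _ ?_
  rwa [show A.map Complex.ofReal = A.map Complex.ofRealHom from rfl,
    ← AddMonoidHom.map_trace Complex.ofRealHom, Complex.ofRealHom_eq_coe, Complex.ofReal_re]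

end Matrix

section FounderControl

variable {lam1 lam2 mu C sigma tau p kappa n1a n1d n2 : ℝ}

noncomputable def founderJacobian (C sigma tau p kappa mu n1a n1d n2 : ℝ) :
    Matrix (Fin 3) (Fin 3) ℝ :=
  !![-(C * n1a) - sigma * n1d / n1a, sigma, -(C + tau) * n1a;
     2 * p * C * n1a + p * C * n2, -(kappa * mu) - sigma, p * C * n1a;
     (-C + tau) * n2, 0, -(C * n2)]

theorem founderJacobian_det (hn1a : n1a ≠ 0)
    (hequil : (kappa * mu + sigma) * n1d = p * C * n1a * (n1a + n2)) :
    (founderJacobian C sigma tau p kappa mu n1a n1d n2).det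
      = tau * n1a * n2 * (C * p * sigma - (kappa * mu + sigma) * tau) := by
  rw [Matrix.det_fin_three]
  simp only [founderJacobian, Matrix.of_apply, Matrix.cons_val', Matrix.cons_val_zero,
    Matrix.cons_val_one, Matrix.cons_val, Matrix.cons_val_fin_one]
  field_simp
  linear_combination (-(sigma * C * n2)) * hequil

theorem founderJacobian_trace_neg (hC : 0 ≤ C) (hsigma : 0 < sigma) (hkappa : 0 ≤ kappa)
    (hmu : 0 ≤ mu) (hn1a : 0 ≤ n1a) (hn1d : 0 ≤ n1d) (hn2 : 0 ≤ n2) :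
    (founderJacobian C sigma tau p kappa mu n1a n1d n2).trace < 0 := by
  rw [Matrix.trace_fin_three]
  simp only [founderJacobian, Matrix.of_apply, Matrix.cons_val', Matrix.cons_val_zero,
    Matrix.cons_val_one, Matrix.cons_val, Matrix.cons_val_fin_one]
  have : 0 ≤ sigma * n1d / n1a := by positivity
  nlinarith [mul_nonneg hC hn1a, mul_nonneg hC hn2, mul_nonneg hkappa hmu]

theorem founderControl_numerators (hD : 0 < kappa * mu + sigma) (htau : 0 < tau)
    (hcond1 : lam2 - mu >
      C * p * sigma / (tau * (kappa * mu + sigma)) * (lam2 - mu) + C / tau * (lam1 - lam2))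
    (hcond2 : C * p * sigma / (tau * (kappa * mu + sigma)) * (lam2 - mu) + C / tau * (lam1 - lam2)
      > lam1 - mu) :
    0 < C * (kappa * mu + sigma) * (lam2 - lam1) + C * p * sigma * (mu - lam2)
        + (kappa * mu + sigma) * tau * (lam2 - mu) ∧
      C * (kappa * mu + sigma) * (lam2 - lam1) + C * p * sigma * (mu - lam2)
        + (kappa * mu + sigma) * tau * (lam1 - mu) < 0 := by
  have hcomb : C * p * sigma / (tau * (kappa * mu + sigma)) * (lam2 - mu) + C / tau * (lam1 - lam2)
      = (C * p * sigma * (lam2 - mu) + C * (kappa * mu + sigma) * (lam1 - lam2))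
        / (tau * (kappa * mu + sigma)) := by
    field_simp
  rw [hcomb, gt_iff_lt, div_lt_iff₀ (by positivity)] at hcond1
  rw [hcomb, gt_iff_lt, lt_div_iff₀ (by positivity)] at hcond2
  constructor <;> linarith

theorem founderControl_margin_pos (hsigma : 0 < sigma) (hp1 : p < 1) (hkappa : 0 ≤ kappa)
    (hmu : 0 ≤ mu) (hC : 0 < C) (hfit : mu < lam1) (hlam : lam1 < lam2)
    (hN2 : C * (kappa * mu + sigma) * (lam2 - lam1) + C * p * sigma * (mu - lam2)
        + (kappa * mu + sigma) * tau * (lam1 - mu) < 0) :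
    0 < C * p * sigma - (kappa * mu + sigma) * tau := by
  have hslack : 0 < C * (kappa * mu + sigma - p * sigma) * (lam2 - lam1) := by
    have : p * sigma < sigma := by nlinarith
    have : 0 < kappa * mu + sigma - p * sigma := by linarith [mul_nonneg hkappa hmu]
    have := sub_pos.2 hlam
    positivity
  have key : (C * p * sigma - (kappa * mu + sigma) * tau) * (lam1 - mu)
      = -(C * (kappa * mu + sigma) * (lam2 - lam1) + C * p * sigma * (mu - lam2)
        + (kappa * mu + sigma) * tau * (lam1 - mu))
        + C * (kappa * mu + sigma - p * sigma) * (lam2 - lam1) := by ring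
  exact pos_of_mul_pos_left (key ▸ by linarith) (sub_pos.2 hfit).le

end FounderControl

theorem stmt_18 (lam1 lam2 mu C sigma tau p kappa : ℝ)
    (hmu : 0 < mu) (hC : 0 < C) (hsigma : 0 < sigma) (htau : 0 < tau)
    (hp0 : 0 < p) (hp1 : p < 1) (hkappa : 0 ≤ kappa) (hfit : lam1 > mu)
    (hcond1 : lam2 - mu >
      C * p * sigma / (tau * (kappa * mu + sigma)) * (lam2 - mu) + C / tau * (lam1 - lam2))
    (hcond2 : C * p * sigma / (tau * (kappa * mu + sigma)) * (lam2 - mu) + C / tau * (lam1 - lam2)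
      > lam1 - mu) :
    let n1a : ℝ := (C * (kappa * mu + sigma) * (lam2 - lam1) + C * p * sigma * (mu - lam2)
        + (kappa * mu + sigma) * tau * (lam2 - mu))
      / (tau * (C * p * sigma - (kappa * mu + sigma) * tau))
    let n1d : ℝ := p * C * (lam2 - lam1) * n1a / (C * p * sigma - (kappa * mu + sigma) * tau)
    let n2 : ℝ := (C * (kappa * mu + sigma) * (lam2 - lam1) + C * p * sigma * (mu - lam2)
        + (kappa * mu + sigma) * tau * (lam1 - mu))
      / (-(tau * (C * p * sigma - (kappa * mu + sigma) * tau)))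
    let A : Matrix (Fin 3) (Fin 3) ℝ :=
      !![-(C * n1a) - sigma * n1d / n1a, sigma, -(C + tau) * n1a;
         2 * p * C * n1a + p * C * n2, -(kappa * mu) - sigma, p * C * n1a;
         (-C + tau) * n2, 0, -(C * n2)]
    0 < A.det ∧ A.trace < 0 ∧
      (∃ z : ℂ, (Matrix.charpoly (A.map (Complex.ofReal))).IsRoot z ∧ 0 < z.re) ∧
      (∃ z : ℂ, (Matrix.charpoly (A.map (Complex.ofReal))).IsRoot z ∧ z.re < 0) := by
  intro n1a n1d n2 A
  have hD : 0 < kappa * mu + sigma := by positivity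
  obtain ⟨hN1, hN2⟩ := founderControl_numerators hD htau hcond1 hcond2
  have hlam : lam1 < lam2 := by nlinarith
  have hE := founderControl_margin_pos hsigma hp1 hkappa hmu.le hC hfit hlam hN2
  have hn1a : 0 < n1a := div_pos hN1 (by positivity)
  have hn2 : 0 < n2 := div_pos_of_neg_of_neg hN2 (neg_neg_of_pos (by positivity))
  have hn1d : 0 < n1d := div_pos (by have := sub_pos.2 hlam; positivity) hE
  have hequil : (kappa * mu + sigma) * n1d = p * C * n1a * (n1a + n2) := by
    simp only [n1d, n1a, n2]
    field_simp
    ring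
  have hdet : 0 < A.det := by
    rw [show A.det = _ from founderJacobian_det hn1a.ne' hequil]
    positivity
  have htr : A.trace < 0 :=
    founderJacobian_trace_neg hC.le hsigma hkappa hmu.le hn1a.le hn1d.le hn2.le
  exact ⟨hdet, htr, A.exists_isRoot_charpoly_re_pos_of_det_pos (by decide) hdet,
    A.exists_isRoot_charpoly_re_neg_of_trace_neg htr⟩
end
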